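/- arXiv:1102.4246 — 2 statements merged into one kernel-verified Lean document; each statement's English description precedes it below -/
import Mathlib

section
/- Let 𝐚 be a knot sequence in an interval J ⊆ ℝ and fix κ ∈ {1,2,3}. For a ∈ 𝐚 with a < sup J let σ_a be the affine map with σ_a(a) = 0 and σ_a(a₊) = 1, and for n ≥ 2 let Vⁿ(𝐚) be the closure in L²(J) of Sₙ⁰(𝐚) + span{zⁿ ∘ σ_a : a ∈ 𝐚, a < sup J}. Then for every integer k ≥ 0 one has V^{3k+κ}(𝐚) ⊆ V^{3(k+1)+κ}(𝐚), and ⋃_{k≥0} V^{3k+κ}(𝐚) is dense in L²(J). -/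
open MeasureTheory Set Filter

noncomputable section

namespace KnotWavelet

/-- The space `L²(J)` for `J ⊆ ℝ`. -/
abbrev L2S (J : Set ℝ) := Lp ℝ 2 (volume.restrict J)

/-- `f ∈ L²(J)` is supported (a.e.) in `I`. -/
def SuppIn (J : Set ℝ) (f : L2S J) (I : Set ℝ) : Prop :=
  ∀ᵐ x ∂(volume.restrict J), x ∉ I → f x = 0

/-- `G_I`, the members of `G` supported in `I`. -/
def suppSet (J : Set ℝ) (G : Set (L2S J)) (I : Set ℝ) : Set (L2S J) :=
  {g ∈ G | SuppIn J g I}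

/-- For a subspace `V`, the subspace of members supported in `I`. -/
def suppSub (J : Set ℝ) (V : Submodule ℝ (L2S J)) (I : Set ℝ) : Submodule ℝ (L2S J) where
  carrier := {f | f ∈ V ∧ SuppIn J f I}
  zero_mem' := ⟨V.zero_mem, by
    filter_upwards [Lp.coeFn_zero ℝ 2 (volume.restrict J)] with x hx _
    simpa using hx⟩
  add_mem' := by
    rintro f g ⟨hfV, hf⟩ ⟨hgV, hg⟩
    refine ⟨V.add_mem hfV hgV, ?_⟩
    filter_upwards [Lp.coeFn_add f g, hf, hg] with x hx h1 h2 hxI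
    rw [hx]
    simp [Pi.add_apply, h1 hxI, h2 hxI]
  smul_mem' := by
    rintro c f ⟨hfV, hf⟩
    refine ⟨V.smul_mem c hfV, ?_⟩
    filter_upwards [Lp.coeFn_smul c f, hf] with x hx h1 hxI
    rw [hx]
    simp [h1 hxI]

/-- The successor `a₊` of `a` in `ks`, as an extended real (`+∞` if there is none). -/
def succE (ks : Set ℝ) (a : ℝ) : EReal := sInf ((fun x : ℝ => (x : EReal)) '' {b ∈ ks | a < b})

/-- The predecessor `a₋` of `a` in `ks`, as an extended real (`−∞` if there is none). -/
def predE (ks : Set ℝ) (a : ℝ) : EReal := sSup ((fun x : ℝ => (x : EReal)) '' {b ∈ ks | b < a})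

/-- The successor `a₊` of `a` in `ks` as a real number (junk value if there is none). -/
def succR (ks : Set ℝ) (a : ℝ) : ℝ := sInf {b ∈ ks | a < b}

/-- The interval `[a, a₊]`. -/
def IccS (ks : Set ℝ) (a : ℝ) : Set ℝ := {x | a ≤ x ∧ (x : EReal) ≤ succE ks a}

/-- The interval `[a₋, a₊]`. -/
def IccPS (ks : Set ℝ) (a : ℝ) : Set ℝ :=
  {x | predE ks a ≤ (x : EReal) ∧ (x : EReal) ≤ succE ks a}

/-- The interval `[a₋, a]`. -/
def IccP (ks : Set ℝ) (a : ℝ) : Set ℝ := {x | predE ks a ≤ (x : EReal) ∧ x ≤ a}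

/-- The interval `(a, a₊)`. -/
def IooS (ks : Set ℝ) (a : ℝ) : Set ℝ := {x | a < x ∧ (x : EReal) < succE ks a}

/-- The interval `[a₊, ∞)` (empty if `a₊ = +∞`). -/
def IciS (ks : Set ℝ) (a : ℝ) : Set ℝ := {x | succE ks a ≤ (x : EReal)}

/-- `ks` is a knot sequence in the interval `J`: it is a subset of `J` with at least three
elements, has no cluster (accumulation) point in `J`, and `inf ks = inf J`, `sup ks = sup J`
(as extended reals). -/
structure IsKnotSeq (J ks : Set ℝ) : Prop where
  subset : ks ⊆ J
  nontrivial : ∃ x y z : ℝ, x ∈ ks ∧ y ∈ ks ∧ z ∈ ks ∧ x ≠ y ∧ x ≠ z ∧ y ≠ z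
  noCluster : ∀ x ∈ J, ¬ AccPt x (Filter.principal ks)
  inf_eq : sInf ((fun x : ℝ => (x : EReal)) '' ks) = sInf ((fun x : ℝ => (x : EReal)) '' J)
  sup_eq : sSup ((fun x : ℝ => (x : EReal)) '' ks) = sSup ((fun x : ℝ => (x : EReal)) '' J)

/-- `a'` is the successor of `a` in `ks`. -/
def IsSucc (ks : Set ℝ) (a a' : ℝ) : Prop :=
  a ∈ ks ∧ a' ∈ ks ∧ a < a' ∧ ∀ b ∈ ks, b ≤ a ∨ a' ≤ b

/-- A collection `Φ ⊆ L²(J)` is locally finite: on each compact interval `K ⊆ J` all but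
finitely many members of `Φ` vanish (a.e.) on `K`. -/
def LocFin (J : Set ℝ) (Φ : Set (L2S J)) : Prop :=
  ∀ K : Set ℝ, IsCompact K → K ⊆ J →
    {φ ∈ Φ | ¬ ∀ᵐ x ∂(volume.restrict J), x ∈ K → φ x = 0}.Finite

/-- `Φ̆_a := Φ_{[a,a₊]}`. -/
def breveAt (J : Set ℝ) (ks : Set ℝ) (Φ : Set (L2S J)) (a : ℝ) : Set (L2S J) :=
  suppSet J Φ (IccS ks a)

open Classical in
/-- `Φ̆_{a₋}` (the empty set if `a` has no predecessor). -/
def brevePred (J : Set ℝ) (ks : Set ℝ) (Φ : Set (L2S J)) (a : ℝ) : Set (L2S J) :=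
  if {b ∈ ks | b < a}.Nonempty then suppSet J Φ (IccP ks a) else ∅

/-- `Φ_a := Φ_{[a₋,a₊]} \ Φ̆_{a₋}`. -/
def midAt (J : Set ℝ) (ks : Set ℝ) (Φ : Set (L2S J)) (a : ℝ) : Set (L2S J) :=
  suppSet J Φ (IccPS ks a) \ brevePred J ks Φ a

/-- `Φ̄_a := Φ_a \ Φ̆_a`. -/
def barAt (J : Set ℝ) (ks : Set ℝ) (Φ : Set (L2S J)) (a : ℝ) : Set (L2S J) :=
  midAt J ks Φ a \ breveAt J ks Φ a

open Classical in
/-- `Φ̄_{a₊}` (the empty set if `a` has no successor). -/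
def barSucc (J : Set ℝ) (ks : Set ℝ) (Φ : Set (L2S J)) (a : ℝ) : Set (L2S J) :=
  if {b ∈ ks | a < b}.Nonempty then barAt J ks Φ (succR ks a) else ∅

open Classical in
/-- Multiplication by the characteristic function of `I` (restriction to `I`). -/
def indL2 (J : Set ℝ) (I : Set ℝ) (f : L2S J) : L2S J :=
  if h : MeasurableSet I then ((Lp.memLp f).indicator h).toLp (I.indicator f) else 0

/-- `Φ` is a basis centered on the knot sequence `ks`. -/
def CenteredBasis (J ks : Set ℝ) (Φ : Set (L2S J)) : Prop :=
  LocFin J Φ ∧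
  Φ = ⋃ a ∈ ks, midAt J ks Φ a ∧
  ∀ a ∈ ks, LinearIndependent ℝ
    (fun φ : ↥(midAt J ks Φ a ∪ barSucc J ks Φ a) => indL2 J (IccS ks a) (φ : L2S J))

/-- `S(Φ)`: the `L²`-closure of the span of `Φ`. -/
def SClos (J : Set ℝ) (Φ : Set (L2S J)) : Submodule ℝ (L2S J) :=
  (Submodule.span ℝ Φ).topologicalClosure

/-- An orthogonal basis centered on `ks`. -/
def OrthoCenteredBasis (J ks : Set ℝ) (Φ : Set (L2S J)) : Prop :=
  CenteredBasis J ks Φ ∧ Φ.Pairwise fun f g => (inner ℝ f g : ℝ) = 0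

/-- The orthogonal projection onto the closure of a subspace, as a linear map. -/
def projL {H : Type*} [NormedAddCommGroup H] [InnerProductSpace ℝ H] [CompleteSpace H]
    (K : Submodule ℝ H) : H →ₗ[ℝ] H :=
  K.topologicalClosure.subtype ∘ₗ
    (K.topologicalClosure.orthogonalProjectionOnto : H →L[ℝ] K.topologicalClosure).toLinearMap

/-- The image `P_K U` of a subspace `U` under the orthogonal projection onto (the closure of)
`K`. -/
def projSub {H : Type*} [NormedAddCommGroup H] [InnerProductSpace ℝ H] [CompleteSpace H]
    (K U : Submodule ℝ H) : Submodule ℝ H :=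
  U.map (projL K)

/-- The image `(I − P_K) U`. -/
def oneSubProjSub {H : Type*} [NormedAddCommGroup H] [InnerProductSpace ℝ H] [CompleteSpace H]
    (K U : Submodule ℝ H) : Submodule ℝ H :=
  U.map (LinearMap.id - projL K)

/-- Two subspaces are orthogonal. -/
def PerpSub {H : Type*} [NormedAddCommGroup H] [InnerProductSpace ℝ H]
    (U V : Submodule ℝ H) : Prop :=
  ∀ f ∈ U, ∀ g ∈ V, (inner ℝ f g : ℝ) = 0

end KnotWavelet

namespace KnotWavelet

open Classical in
/-- Interpret a plain function as an element of `L²(J)`. -/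
def toL2 (J : Set ℝ) (f : ℝ → ℝ) : L2S J :=
  if h : MemLp f 2 (volume.restrict J) then h.toLp f else 0

/-- `p` is the family of monic ultraspherical polynomials with parameter `5/2`:
`p i` is the monic polynomial of degree `i` orthogonal on `[−1,1]` with respect to the
weight `(1−x²)²` to all polynomials of lower degree. -/
def IsMonicUltraspherical (p : ℕ → Polynomial ℝ) : Prop :=
  ∀ i : ℕ, (p i).Monic ∧ (p i).natDegree = i ∧
    ∀ q : Polynomial ℝ, q.degree < (i : WithBot ℕ) →
      ∫ x in (-1 : ℝ)..1, (1 - x ^ 2) ^ 2 * ((p i).eval x * q.eval x) = 0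

/-- `φ̃ⁿ(x) = x(1−x)·p_{n−2}^{5/2}(2x−1)·χ_{[0,1)}(x)` as a plain function. -/
def phiF (p : ℕ → Polynomial ℝ) (n : ℕ) : ℝ → ℝ := fun x =>
  Set.indicator (Set.Ico (0 : ℝ) 1) (fun y => y * (1 - y) * (p (n - 2)).eval (2 * y - 1)) x

/-- `α_n`. -/
def alphaN (n : ℕ) : ℝ :=
  -((n : ℝ) + 1) / (2 * n + 5) +
    ((n : ℝ) + 3) / (2 * n + 5) *
      Real.sqrt (3 * ((n : ℝ) + 1) * (n + 3) / ((2 * n + 7) * (2 * n + 3)))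

/-- `zⁿ := α_n·φ̃^{n+1} + φ̃^{n+3}` as a plain function. -/
def zF (p : ℕ → Polynomial ℝ) (n : ℕ) : ℝ → ℝ := fun x =>
  alphaN n * phiF p (n + 1) x + phiF p (n + 3) x

/-- The spline space `Sₙ⁰(ks)`: continuous functions in `L²(J)` supported in `J` that are
polynomials of degree at most `n` on each interval `(a, a₊)`, `a ∈ ks`. -/
def SplineSet (J ks : Set ℝ) (n : ℕ) : Set (L2S J) :=
  {f | ∃ g : ℝ → ℝ, ContinuousOn g J ∧ (∀ x ∉ J, g x = 0) ∧
    (∀ a ∈ ks, ∃ q : Polynomial ℝ, q.degree ≤ (n : WithBot ℕ) ∧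
      ∀ x ∈ IooS ks a, g x = q.eval x) ∧
    (⇑f : ℝ → ℝ) =ᵐ[volume.restrict J] g}

/-- `zⁿ ∘ σ_a`, where `σ_a` is the affine map sending `a ↦ 0` and `a₊ ↦ 1`. -/
def ZfunN (J ks : Set ℝ) (p : ℕ → Polynomial ℝ) (n : ℕ) (a : ℝ) : L2S J :=
  toL2 J fun x => zF p n ((x - a) / (succR ks a - a))

/-- `Vⁿ(ks)`: the `L²(J)`-closure of `Sₙ⁰(ks) + span {zⁿ ∘ σ_a : a ∈ ks, a < sup J}`. -/
def Vn (J ks : Set ℝ) (p : ℕ → Polynomial ℝ) (n : ℕ) : Submodule ℝ (L2S J) :=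
  (Submodule.span ℝ
    (SplineSet J ks n ∪
      {f | ∃ a ∈ ks, (∃ y ∈ J, a < y) ∧ f = ZfunN J ks p n a})).topologicalClosure

end KnotWavelet

/-!
Each generator of `Vⁿ` is a continuous spline of degree `n + 3`: on `[a, a₊]` the function
`zⁿ ∘ σ_a` is a polynomial of degree `n + 3` vanishing at both ends, since every `φ̃ᵐ` carries
the factor `x(1 − x)`. Hence `Vⁿ ⊆ closure Sₙ₊₃⁰ ⊆ Vⁿ⁺³`.

For density, let `f` be orthogonal to every `Vⁿ`. Then `f` is orthogonal to every bubble
`(x − a)(a₊ − x) q(x)` supported on a knot interval `[a, a₊]`, so `(x − a)(a₊ − x) f(x)`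
annihilates all polynomials on `[a, a₊]`; by Weierstrass approximation it annihilates all
continuous functions there, hence vanishes a.e. The knot intervals cover `J` up to the countable
set of knots, so `f = 0`.
-/

namespace KnotWavelet

open Polynomial

variable {J ks : Set ℝ}

theorem IsKnotSeq.closure_inter_subset (hks : IsKnotSeq J ks) {S : Set ℝ} (hS : S ⊆ ks) :
    closure S ∩ J ⊆ S := by
  rintro x ⟨hxS, hxJ⟩
  by_contra hx
  refine hks.noCluster x hxJ (AccPt.mono ?_ (principal_mono.2 hS))
  rw [accPt_principal_iff_clusterPt, sdiff_singleton_eq_self hx]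
  exact mem_closure_iff_clusterPt.1 hxS

theorem IsKnotSeq.countable (hks : IsKnotSeq J ks) : ks.Countable :=
  (HereditarilyLindelofSpace.isLindelof ks).countable
    (discreteTopology_of_noAccPts fun x hx => hks.noCluster x (hks.subset hx))

theorem IsKnotSeq.exists_gt (hks : IsKnotSeq J ks) {a y : ℝ} (hy : y ∈ J) (hay : a < y) :
    ∃ b ∈ ks, a < b := by
  have : (a : EReal) < sSup ((fun x : ℝ => (x : EReal)) '' ks) := by
    rw [hks.sup_eq]
    exact (EReal.coe_lt_coe_iff.2 hay).trans_le (le_sSup ⟨y, hy, rfl⟩)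
  obtain ⟨_, ⟨b, hb, rfl⟩, hab⟩ := lt_sSup_iff.1 this
  exact ⟨b, hb, EReal.coe_lt_coe_iff.1 hab⟩

theorem IsKnotSeq.exists_lt (hks : IsKnotSeq J ks) {x : ℝ} (hx : x ∈ J) (hxks : x ∉ ks) :
    ∃ b ∈ ks, b < x := by
  by_contra! hge
  suffices x ∈ closure ks from hxks (hks.closure_inter_subset subset_rfl ⟨this, hx⟩)
  refine Metric.mem_closure_iff.2 fun ε hε => ?_
  have : sInf ((fun x : ℝ => (x : EReal)) '' ks) < ((x + ε : ℝ) : EReal) := by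
    rw [hks.inf_eq]
    exact (sInf_le (mem_image_of_mem _ hx)).trans_lt (EReal.coe_lt_coe_iff.2 (by linarith))
  obtain ⟨_, ⟨b, hb, rfl⟩, hbε⟩ := sInf_lt_iff.1 this
  refine ⟨b, hb, ?_⟩
  rw [Real.dist_eq, abs_lt]
  constructor <;> linarith [hge b hb, EReal.coe_lt_coe_iff.1 hbε]

theorem IsSucc.isLeast {a r : ℝ} (h : IsSucc ks a r) : IsLeast {b ∈ ks | a < b} r :=
  ⟨⟨h.2.1, h.2.2.1⟩, fun b hb => (h.2.2.2 b hb.1).resolve_left hb.2.not_ge⟩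

theorem IsSucc.succR_eq {a r : ℝ} (h : IsSucc ks a r) : succR ks a = r :=
  h.isLeast.csInf_eq

theorem IsSucc.succE_eq {a r : ℝ} (h : IsSucc ks a r) : succE ks a = r :=
  (EReal.coe_strictMono.monotone.map_isLeast h.isLeast).isGLB.sInf_eq

theorem succE_le {a b : ℝ} (hb : b ∈ ks) (hab : a < b) : succE ks a ≤ b :=
  sInf_le ⟨b, ⟨hb, hab⟩, rfl⟩

theorem IsSucc.Icc_subset (hJ : J.OrdConnected) (hks : IsKnotSeq J ks) {a r : ℝ}
    (h : IsSucc ks a r) : Icc a r ⊆ J :=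
  hJ.out (hks.subset h.1) (hks.subset h.2.1)

theorem IsKnotSeq.exists_isSucc (hJ : J.OrdConnected) (hks : IsKnotSeq J ks) {a b : ℝ}
    (ha : a ∈ ks) (hb : b ∈ ks) (hab : a < b) : ∃ r, IsSucc ks a r := by
  set S := {c ∈ ks | a < c}
  have hne : S.Nonempty := ⟨b, hb, hab⟩
  have hbdd : BddBelow S := ⟨a, fun c hc => hc.2.le⟩
  have hmem : sInf S ∈ S := hks.closure_inter_subset (sep_subset _ _)
    ⟨csInf_mem_closure hne hbdd, hJ.out (hks.subset ha) (hks.subset hb)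
      ⟨le_csInf hne fun c hc => hc.2.le, csInf_le hbdd ⟨hb, hab⟩⟩⟩
  exact ⟨sInf S, ha, hmem.1, hmem.2, fun c hc =>
    (le_or_gt c a).imp_right fun hac => csInf_le hbdd ⟨hc, hac⟩⟩

theorem IsKnotSeq.exists_isSucc_mem_Ioo (hJ : J.OrdConnected) (hks : IsKnotSeq J ks) {x : ℝ}
    (hx : x ∈ J) (hxks : x ∉ ks) : ∃ a r, IsSucc ks a r ∧ x ∈ Ioo a r := by
  set T := {c ∈ ks | c < x}
  obtain ⟨b, hb, hbx⟩ := hks.exists_lt hx hxks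
  have hne : T.Nonempty := ⟨b, hb, hbx⟩
  have hbdd : BddAbove T := ⟨x, fun c hc => hc.2.le⟩
  have ha : sSup T ∈ T := hks.closure_inter_subset (sep_subset _ _)
    ⟨csSup_mem_closure hne hbdd, hJ.out (hks.subset hb) hx
      ⟨le_csSup hbdd ⟨hb, hbx⟩, csSup_le hne fun c hc => hc.2.le⟩⟩
  obtain ⟨c, hc, hac⟩ := hks.exists_gt hx ha.2
  obtain ⟨r, hr⟩ := hks.exists_isSucc hJ ha.1 hc hac
  refine ⟨sSup T, r, hr, ha.2, lt_of_not_ge fun hrx => ?_⟩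
  have hrT : r ∈ T := ⟨hr.2.1, hrx.lt_of_ne fun h => hxks (h ▸ hr.2.1)⟩
  exact (le_csSup hbdd hrT).not_gt hr.2.2.1

theorem coeFn_toL2 {f : ℝ → ℝ} (h : MemLp f 2 (volume.restrict J)) :
    toL2 J f =ᵐ[volume.restrict J] f := by
  rw [toL2, dif_pos h]
  exact h.coeFn_toLp

theorem continuous_indicator_Icc_eval {a r : ℝ} {Q : ℝ[X]} (ha : Q.eval a = 0)
    (hr : Q.eval r = 0) : Continuous ((Icc a r).indicator Q.eval) := by
  refine continuous_indicator (fun x hx => ?_) Q.continuous.continuousOn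
  rw [frontier, closure_Icc, interior_Icc] at hx
  obtain ⟨⟨hax, hxr⟩, hxI⟩ := hx
  rcases hax.eq_or_lt with rfl | hax
  · exact ha
  · rwa [hxr.antisymm (not_lt.1 fun h => hxI ⟨hax, h⟩)]

theorem memLp_indicator_Icc_eval {a r : ℝ} {Q : ℝ[X]} (ha : Q.eval a = 0)
    (hr : Q.eval r = 0) : MemLp ((Icc a r).indicator Q.eval) 2 (volume.restrict J) :=
  ((continuous_indicator_Icc_eval ha hr).memLp_of_hasCompactSupport
    (HasCompactSupport.intro isCompact_Icc fun _ hx => indicator_of_notMem hx _)).restrict J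

theorem indicator_Icc_eval_mem_splineSet (hJ : J.OrdConnected) (hks : IsKnotSeq J ks)
    {a r : ℝ} (har : IsSucc ks a r) {n : ℕ} {Q : ℝ[X]} (hdeg : Q.degree ≤ n)
    (ha : Q.eval a = 0) (hr : Q.eval r = 0) :
    toL2 J ((Icc a r).indicator Q.eval) ∈ SplineSet J ks n := by
  refine ⟨_, (continuous_indicator_Icc_eval ha hr).continuousOn,
    fun x hx => indicator_of_notMem (fun h => hx (har.Icc_subset hJ hks h)) _,
    fun c hc => ?_, coeFn_toL2 (memLp_indicator_Icc_eval ha hr)⟩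
  rcases lt_trichotomy a c with hac | rfl | hca
  · refine ⟨0, by simp, fun x hx =>
      (indicator_of_notMem (fun hxI => ?_) _).trans eval_zero.symm⟩
    have hrc : r ≤ c := (har.2.2.2 c hc).resolve_left hac.not_ge
    exact (hrc.trans_lt hx.1).not_ge hxI.2
  · refine ⟨Q, hdeg, fun x hx =>
      indicator_of_mem (show x ∈ Icc a r from ⟨hx.1.le, ?_⟩) _⟩
    rw [IooS, mem_ofPred_eq, har.succE_eq] at hx
    exact (EReal.coe_lt_coe_iff.1 hx.2).le
  · refine ⟨0, by simp, fun x hx =>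
      (indicator_of_notMem (fun hxI => ?_) _).trans eval_zero.symm⟩
    have : (x : EReal) < a := hx.2.trans_le (succE_le har.1 hca)
    exact (EReal.coe_lt_coe_iff.1 this).not_ge hxI.1

theorem splineSet_mono {m n : ℕ} (h : m ≤ n) : SplineSet J ks m ⊆ SplineSet J ks n := by
  rintro f ⟨g, hg, hgJ, hpoly, hfg⟩
  refine ⟨g, hg, hgJ, fun a ha => ?_, hfg⟩
  obtain ⟨q, hq, hgq⟩ := hpoly a ha
  exact ⟨q, hq.trans (by exact_mod_cast h), hgq⟩

theorem splineSet_subset_Vn (p : ℕ → ℝ[X]) (n : ℕ) : SplineSet J ks n ⊆ Vn J ks p n :=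
  fun _ hf => Submodule.le_topologicalClosure _ (Submodule.subset_span (Or.inl hf))

def phiPoly (p : ℕ → ℝ[X]) (m : ℕ) : ℝ[X] := X * (1 - X) * (p (m - 2)).comp (2 * X - 1)

def zPoly (p : ℕ → ℝ[X]) (n : ℕ) : ℝ[X] :=
  C (alphaN n) * phiPoly p (n + 1) + phiPoly p (n + 3)

-- `φ̃ᵐ` vanishes at `1`, so the half-open support `[0, 1)` may be closed.
theorem phiF_eq_indicator (p : ℕ → ℝ[X]) (m : ℕ) :
    phiF p m = (Icc 0 1).indicator (phiPoly p m).eval := by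
  ext y
  by_cases hy : y = 1
  · simp [hy, phiF, phiPoly]
  · simp [phiF, phiPoly, indicator_apply, lt_iff_le_and_ne, hy]

theorem zF_eq_indicator (p : ℕ → ℝ[X]) (n : ℕ) :
    zF p n = (Icc 0 1).indicator (zPoly p n).eval := by
  ext y
  simp only [zF, phiF_eq_indicator, zPoly, indicator_apply]
  split_ifs <;> simp

theorem eval_zPoly_zero (p : ℕ → ℝ[X]) (n : ℕ) : (zPoly p n).eval 0 = 0 := by
  simp [zPoly, phiPoly]

theorem eval_zPoly_one (p : ℕ → ℝ[X]) (n : ℕ) : (zPoly p n).eval 1 = 0 := by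
  simp [zPoly, phiPoly]

theorem natDegree_phiPoly_le (p : ℕ → ℝ[X]) (m : ℕ) :
    (phiPoly p m).natDegree ≤ (p (m - 2)).natDegree + 2 := by
  have hlin : (2 * X - 1 : ℝ[X]).natDegree = 1 := by compute_degree!
  unfold phiPoly
  compute_degree
  rw [natDegree_comp, hlin]
  omega

theorem natDegree_zPoly_le {p : ℕ → ℝ[X]} (hp : IsMonicUltraspherical p) (n : ℕ) :
    (zPoly p n).natDegree ≤ n + 3 := by
  have h1 := natDegree_phiPoly_le p (n + 1)
  have h3 := natDegree_phiPoly_le p (n + 3)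
  rw [(hp _).2.1] at h1 h3
  refine (natDegree_add_le _ _).trans (max_le ((natDegree_C_mul_le _ _).trans ?_) ?_) <;> omega

theorem mem_Icc_div_iff {a r x : ℝ} (har : a < r) :
    (x - a) / (r - a) ∈ Icc 0 1 ↔ x ∈ Icc a r := by
  have hra : 0 < r - a := sub_pos.2 har
  simp only [mem_Icc, le_div_iff₀ hra, div_le_one hra, zero_mul, sub_nonneg]
  exact and_congr_right' (by constructor <;> intro h <;> linarith)

theorem ZfunN_eq {p : ℕ → ℝ[X]} {n : ℕ} {a r : ℝ} (har : IsSucc ks a r) :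
    ZfunN J ks p n a =
      toL2 J ((Icc a r).indicator ((zPoly p n).comp ((X - C a) * C (r - a)⁻¹)).eval) := by
  rw [ZfunN, har.succR_eq, zF_eq_indicator]
  congr 1
  ext x
  by_cases hx : x ∈ Icc a r
  · rw [indicator_of_mem hx, indicator_of_mem ((mem_Icc_div_iff har.2.2.1).2 hx)]
    simp [div_eq_mul_inv]
  · rw [indicator_of_notMem hx, indicator_of_notMem (mt (mem_Icc_div_iff har.2.2.1).1 hx)]

theorem ZfunN_mem_splineSet (hJ : J.OrdConnected) (hks : IsKnotSeq J ks) {p : ℕ → ℝ[X]}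
    (hp : IsMonicUltraspherical p) {n : ℕ} {a : ℝ} (ha : a ∈ ks) (hy : ∃ y ∈ J, a < y) :
    ZfunN J ks p n a ∈ SplineSet J ks (n + 3) := by
  obtain ⟨y, hyJ, hay⟩ := hy
  obtain ⟨b, hb, hab⟩ := hks.exists_gt hyJ hay
  obtain ⟨r, har⟩ := hks.exists_isSucc hJ ha hb hab
  have hra : r - a ≠ 0 := (sub_pos.2 har.2.2.1).ne'
  rw [ZfunN_eq har]
  refine indicator_Icc_eval_mem_splineSet hJ hks har ?_ (by simp [eval_zPoly_zero])
    (by simp [hra, eval_zPoly_one])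
  refine degree_le_of_natDegree_le (natDegree_comp_le.trans ?_)
  have hlin : ((X - C a) * C (r - a)⁻¹).natDegree ≤ 1 := by compute_degree
  nlinarith [natDegree_zPoly_le hp n]

theorem Vn_le_Vn_add_three (hJ : J.OrdConnected) (hks : IsKnotSeq J ks) {p : ℕ → ℝ[X]}
    (hp : IsMonicUltraspherical p) (n : ℕ) : Vn J ks p n ≤ Vn J ks p (n + 3) := by
  refine Submodule.topologicalClosure_minimal _ (Submodule.span_le.2 ?_)
    (Submodule.isClosed_topologicalClosure _)
  rintro f (hf | ⟨a, ha, hy, rfl⟩)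
  · exact splineSet_subset_Vn p _ (splineSet_mono (by omega) hf)
  · exact splineSet_subset_Vn p _ (ZfunN_mem_splineSet hJ hks hp ha hy)

theorem integral_mul_eq_zero_of_forall_integral_eval_mul_eq_zero {a b : ℝ} {F : ℝ → ℝ}
    (hF : IntegrableOn F (Icc a b)) (h : ∀ q : ℝ[X], ∫ x in Icc a b, q.eval x * F x = 0)
    {g : ℝ → ℝ} (hg : ContinuousOn g (Icc a b)) : ∫ x in Icc a b, g x * F x = 0 := by
  refine eq_of_forall_dist_le fun ε hε => ?_
  set C := ∫ x in Icc a b, |F x|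
  have hC : 0 ≤ C := integral_nonneg fun _ => abs_nonneg _
  obtain ⟨q, hq⟩ :=
    exists_polynomial_near_of_continuousOn a b g hg (ε / (C + 1)) (by positivity)
  calc dist (∫ x in Icc a b, g x * F x) 0
      = ‖∫ x in Icc a b, (g x - q.eval x) * F x‖ := by
        simp_rw [sub_mul]
        rw [integral_sub (hF.continuousOn_mul hg isCompact_Icc)
          (hF.continuousOn_mul q.continuous.continuousOn isCompact_Icc), h q, sub_zero,
          dist_zero_right]
    _ ≤ ∫ x in Icc a b, ε / (C + 1) * |F x| := by
        refine norm_integral_le_of_norm_le (hF.abs.const_mul _) ?_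
        filter_upwards [ae_restrict_mem measurableSet_Icc] with x hx
        rw [norm_mul, Real.norm_eq_abs, Real.norm_eq_abs, abs_sub_comm]
        exact mul_le_mul_of_nonneg_right (hq x hx).le (abs_nonneg _)
    _ = ε / (C + 1) * C := integral_const_mul _ _
    _ ≤ ε := by
        rw [div_mul_eq_mul_div, div_le_iff₀ (by positivity)]
        nlinarith

theorem ae_eq_zero_of_forall_integral_eval_mul_eq_zero {a b : ℝ} {F : ℝ → ℝ}
    (hF : IntegrableOn F (Icc a b)) (h : ∀ q : ℝ[X], ∫ x in Icc a b, q.eval x * F x = 0) :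
    ∀ᵐ x ∂volume.restrict (Icc a b), F x = 0 :=
  ae_eq_zero_of_integral_contDiff_smul_eq_zero hF.locallyIntegrable fun _ hg _ =>
    integral_mul_eq_zero_of_forall_integral_eval_mul_eq_zero hF h hg.continuous.continuousOn

theorem inner_toL2_indicator {s : Set ℝ} (hs : MeasurableSet s) (hsJ : s ⊆ J) {g : ℝ → ℝ}
    (hg : MemLp (s.indicator g) 2 (volume.restrict J)) (f : L2S J) :
    inner ℝ (toL2 J (s.indicator g)) f = ∫ x in s, g x * f x := by
  rw [L2.inner_def]
  calc ∫ x, inner ℝ (toL2 J (s.indicator g) x) (f x) ∂volume.restrict J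
      = ∫ x, s.indicator (fun x => g x * f x) x ∂volume.restrict J := by
        refine integral_congr_ae ?_
        filter_upwards [coeFn_toL2 hg] with x hx
        by_cases hxs : x ∈ s <;> simp [hx, hxs, mul_comm]
    _ = ∫ x in s, g x * f x := by
        rw [integral_indicator hs, Measure.restrict_restrict hs, inter_eq_self_of_subset_left hsJ]

def bubblePoly (a r : ℝ) (q : ℝ[X]) : ℝ[X] := (X - C a) * (C r - X) * q

theorem bubble_mem_Vn (hJ : J.OrdConnected) (hks : IsKnotSeq J ks) {a r : ℝ}
    (har : IsSucc ks a r) (p : ℕ → ℝ[X]) {n : ℕ} {q : ℝ[X]} (hq : q.natDegree + 2 ≤ n) :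
    toL2 J ((Icc a r).indicator (bubblePoly a r q).eval) ∈ Vn J ks p n := by
  refine splineSet_subset_Vn p n (indicator_Icc_eval_mem_splineSet hJ hks har
    (degree_le_of_natDegree_le ?_) (by simp [bubblePoly]) (by simp [bubblePoly]))
  unfold bubblePoly
  compute_degree
  omega

theorem ae_eq_zero_on_Icc_of_forall_inner_bubble_eq_zero (hJ : J.OrdConnected)
    (hks : IsKnotSeq J ks) {a r : ℝ} (har : IsSucc ks a r) (f : L2S J)
    (h : ∀ q, inner ℝ (toL2 J ((Icc a r).indicator (bubblePoly a r q).eval)) f = 0) :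
    ∀ᵐ x ∂volume.restrict (Icc a r), f x = 0 := by
  have hsub := har.Icc_subset hJ hks
  have hf : IntegrableOn f (Icc a r) := by
    have := (Lp.memLp f).restrict (Icc a r)
    rw [Measure.restrict_restrict measurableSet_Icc, inter_eq_self_of_subset_left hsub] at this
    exact this.integrable one_le_two
  have hF : ∀ᵐ x ∂volume.restrict (Icc a r), (x - a) * (r - x) * f x = 0 := by
    refine ae_eq_zero_of_forall_integral_eval_mul_eq_zero
      (hf.continuousOn_mul (by fun_prop) isCompact_Icc) fun q => ?_
    rw [← h q, inner_toL2_indicator measurableSet_Icc hsub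
      (memLp_indicator_Icc_eval (by simp [bubblePoly]) (by simp [bubblePoly]))]
    congr 1 with x
    simp only [bubblePoly, eval_mul, eval_sub, eval_X, eval_C]
    ring
  rw [← restrict_Ioo_eq_restrict_Icc] at hF ⊢
  filter_upwards [hF, ae_restrict_mem measurableSet_Ioo] with x hx hxI
  exact (mul_eq_zero.1 hx).resolve_left
    (mul_ne_zero (sub_ne_zero.2 hxI.1.ne') (sub_ne_zero.2 hxI.2.ne'))

theorem eq_zero_of_forall_inner_bubble_eq_zero (hJ : J.OrdConnected) (hks : IsKnotSeq J ks)
    (f : L2S J) (h : ∀ a r, IsSucc ks a r → ∀ q,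
      inner ℝ (toL2 J ((Icc a r).indicator (bubblePoly a r q).eval)) f = 0) :
    f = 0 := by
  set A := {a ∈ ks | ∃ b ∈ ks, a < b}
  have hcover : J ⊆ ks ∪ ⋃ a ∈ A, Icc a (succR ks a) := by
    intro x hx
    by_cases hxks : x ∈ ks
    · exact Or.inl hxks
    obtain ⟨a, r, har, hxar⟩ := hks.exists_isSucc_mem_Ioo hJ hx hxks
    exact Or.inr (mem_biUnion ⟨har.1, r, har.2.1, har.2.2.1⟩
      (har.succR_eq ▸ Ioo_subset_Icc_self hxar))
  have hf : ∀ᵐ x ∂volume.restrict (ks ∪ ⋃ a ∈ A, Icc a (succR ks a)), f x = 0 := by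
    rw [ae_restrict_union_iff, ae_restrict_biUnion_iff _ (hks.countable.mono (sep_subset _ _))]
    refine ⟨by rw [ae_restrict_eq_bot.2 (hks.countable.measure_zero _)]; exact eventually_bot,
      fun a ⟨ha, b, hb, hab⟩ => ?_⟩
    obtain ⟨r, har⟩ := hks.exists_isSucc hJ ha hb hab
    rw [har.succR_eq]
    exact ae_eq_zero_on_Icc_of_forall_inner_bubble_eq_zero hJ hks har f (h a r har)
  rw [Lp.eq_zero_iff_ae_eq_zero]
  exact ae_restrict_of_ae_restrict_of_subset hcover hf

theorem orthogonal_iSup_Vn_eq_bot (hJ : J.OrdConnected) (hks : IsKnotSeq J ks)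
    (p : ℕ → ℝ[X]) {N : ℕ → ℕ} (hN : ∀ m, ∃ k, m ≤ N k) :
    (⨆ k, Vn J ks p (N k))ᗮ = ⊥ := by
  refine (Submodule.eq_bot_iff _).2 fun f hf => ?_
  refine eq_zero_of_forall_inner_bubble_eq_zero hJ hks f fun a r har q => ?_
  obtain ⟨k, hk⟩ := hN (q.natDegree + 2)
  exact Submodule.inner_right_of_mem_orthogonal
    (Submodule.mem_iSup_of_mem k (bubble_mem_Vn (n := N k) hJ hks har p hk)) hf

end KnotWavelet

open KnotWavelet in
theorem Vn_nested_and_dense_general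
    (J ks : Set ℝ) (hJ : J.OrdConnected) (hks : IsKnotSeq J ks)
    (κ : ℕ)
    (p : ℕ → Polynomial ℝ) (hp : IsMonicUltraspherical p) :
    (∀ k : ℕ, Vn J ks p (3 * k + κ) ≤ Vn J ks p (3 * (k + 1) + κ)) ∧
    Dense (⋃ k : ℕ, (Vn J ks p (3 * k + κ) : Set (L2S J))) := by
  have hstep : ∀ k : ℕ, Vn J ks p (3 * k + κ) ≤ Vn J ks p (3 * (k + 1) + κ) := fun k => by
    rw [show 3 * (k + 1) + κ = 3 * k + κ + 3 by ring]
    exact Vn_le_Vn_add_three hJ hks hp _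
  refine ⟨hstep, ?_⟩
  rw [← Submodule.coe_iSup_of_directed _ (monotone_nat_of_le_succ hstep).directed_le,
    Submodule.dense_iff_topologicalClosure_eq_top, Submodule.topologicalClosure_eq_top_iff]
  exact orthogonal_iSup_Vn_eq_bot hJ hks p fun m => ⟨m, by omega⟩

open KnotWavelet in
theorem Vn_nested_and_dense
    (J ks : Set ℝ) (hJ : J.OrdConnected) (hks : IsKnotSeq J ks)
    (κ : ℕ) (hκ : κ ∈ ({1, 2, 3} : Set ℕ))
    (p : ℕ → Polynomial ℝ) (hp : IsMonicUltraspherical p) :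
    (∀ k : ℕ, Vn J ks p (3 * k + κ) ≤ Vn J ks p (3 * (k + 1) + κ)) ∧
    Dense (⋃ k : ℕ, (Vn J ks p (3 * k + κ) : Set (L2S J))) :=
  Vn_nested_and_dense_general J ks hJ hks κ p hp
end
end

section
/- For every a ∈ 𝐚, the spaces V̆⁰_a, A_a⁺, and A_{a₊}⁻ are mutually orthogonal subspaces of V̆¹_a, and P_{V̆¹_a}V⁰ = V̆⁰_a ⊕ A_a⁺ ⊕ A_{a₊}⁻. -/
open MeasureTheory Set Filter

noncomputable section

namespace KnotWavelet

variable (J ks : Set ℝ)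

open Classical in
/-- Multiplication by the characteristic function of `I`, as a linear map. -/
def indLM (I : Set ℝ) : L2S J →ₗ[ℝ] L2S J where
  toFun := indL2 J I
  map_add' f g := by
    unfold indL2
    split_ifs with h
    · have hf := (Lp.memLp f).indicator h
      have hg := (Lp.memLp g).indicator h
      calc ((Lp.memLp (f + g)).indicator h).toLp (I.indicator ⇑(f + g))
          = (hf.add hg).toLp (I.indicator ⇑f + I.indicator ⇑g) := by
            refine MemLp.toLp_congr _ _ ?_
            filter_upwards [Lp.coeFn_add f g] with x hx
            by_cases hxI : x ∈ I
            · rw [Pi.add_apply, Set.indicator_of_mem hxI, Set.indicator_of_mem hxI,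
                Set.indicator_of_mem hxI]
              exact hx
            · rw [Pi.add_apply, Set.indicator_of_notMem hxI, Set.indicator_of_notMem hxI,
                Set.indicator_of_notMem hxI, add_zero]
        _ = hf.toLp (I.indicator ⇑f) + hg.toLp (I.indicator ⇑g) := MemLp.toLp_add hf hg
    · simp
  map_smul' c f := by
    unfold indL2
    split_ifs with h
    · have hf := (Lp.memLp f).indicator h
      calc ((Lp.memLp (c • f)).indicator h).toLp (I.indicator ⇑(c • f))
          = (hf.const_smul c).toLp (c • I.indicator ⇑f) := by
            refine MemLp.toLp_congr _ _ ?_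
            filter_upwards [Lp.coeFn_smul c f] with x hx
            by_cases hxI : x ∈ I
            · rw [Pi.smul_apply, Set.indicator_of_mem hxI, Set.indicator_of_mem hxI]
              exact hx
            · rw [Pi.smul_apply, Set.indicator_of_notMem hxI, Set.indicator_of_notMem hxI,
                smul_zero]
        _ = c • hf.toLp (I.indicator ⇑f) := MemLp.toLp_const_smul c hf
    · simp

/-- The image `χ_I · U` of a subspace under multiplication by the characteristic function of
`I`. -/
def chiMul (I : Set ℝ) (U : Submodule ℝ (L2S J)) : Submodule ℝ (L2S J) :=
  U.map (indLM J I)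

/-- `V_a`, the subspace of members of `V` supported in `[a₋, a₊]`. -/
def Vmid (V : Submodule ℝ (L2S J)) (a : ℝ) : Submodule ℝ (L2S J) :=
  suppSub J V (IccPS ks a)

/-- `V̆_a`, the subspace of members of `V` supported in `[a, a₊]`. -/
def Vbreve (V : Submodule ℝ (L2S J)) (a : ℝ) : Submodule ℝ (L2S J) :=
  suppSub J V (IccS ks a)

open Classical in
/-- `V̆_{a₋}` (the zero subspace if `a` has no predecessor in `ks`). -/
def VbrevePred (V : Submodule ℝ (L2S J)) (a : ℝ) : Submodule ℝ (L2S J) :=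
  if {b ∈ ks | b < a}.Nonempty then suppSub J V (IccP ks a) else ⊥

/-- `V̄_a := (I − P_{V̆_{a₋} ⊕ V̆_a}) V_a`. -/
def Vbar (V : Submodule ℝ (L2S J)) (a : ℝ) : Submodule ℝ (L2S J) :=
  oneSubProjSub (VbrevePred J ks V a ⊔ Vbreve J ks V a) (Vmid J ks V a)

/-- `A_a⁺ := P_{V̆¹_a} V̄⁰_a`. -/
def Aplus (V₀ V₁ : Submodule ℝ (L2S J)) (a : ℝ) : Submodule ℝ (L2S J) :=
  projSub (Vbreve J ks V₁ a) (Vbar J ks V₀ a)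

/-- `A_a⁻ := P_{V̆¹_{a₋}} V̄⁰_a`. -/
def Aminus (V₀ V₁ : Submodule ℝ (L2S J)) (a : ℝ) : Submodule ℝ (L2S J) :=
  projSub (VbrevePred J ks V₁ a) (Vbar J ks V₀ a)

/-- The wavelet space `W := V¹ ⊖ V⁰`, the orthogonal complement of `V⁰` in `V¹`. -/
def Wsp (V₀ V₁ : Submodule ℝ (L2S J)) : Submodule ℝ (L2S J) :=
  V₁ ⊓ V₀ᗮ

/-- `W̄_a := W_a ⊖ (W̆_{a₋} ⊕ W̆_a)`. -/
def Wbar (V₀ V₁ : Submodule ℝ (L2S J)) (a : ℝ) : Submodule ℝ (L2S J) :=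
  Vmid J ks (Wsp J V₀ V₁) a ⊓
    (VbrevePred J ks (Wsp J V₀ V₁) a ⊔ Vbreve J ks (Wsp J V₀ V₁) a)ᗮ

/-- `Y_a := V̄⁰_a ∩ V̄¹_a`. -/
def Ysp (V₀ V₁ : Submodule ℝ (L2S J)) (a : ℝ) : Submodule ℝ (L2S J) :=
  Vbar J ks V₀ a ⊓ Vbar J ks V₁ a

/-- `Y_a⁺ := (χ_{[a,a₊]}·V̄⁰_a) ∩ (χ_{[a,a₊]}·V̄¹_a)`. -/
def Yplus (V₀ V₁ : Submodule ℝ (L2S J)) (a : ℝ) : Submodule ℝ (L2S J) :=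
  chiMul J (IccS ks a) (Vbar J ks V₀ a) ⊓ chiMul J (IccS ks a) (Vbar J ks V₁ a)

/-- `Y_a⁻ := (χ_{[a₋,a]}·V̄⁰_a) ∩ (χ_{[a₋,a]}·V̄¹_a)`. -/
def Yminus (V₀ V₁ : Submodule ℝ (L2S J)) (a : ℝ) : Submodule ℝ (L2S J) :=
  chiMul J (IccP ks a) (Vbar J ks V₀ a) ⊓ chiMul J (IccP ks a) (Vbar J ks V₁ a)

/-- `X_a⁺ := (χ_{[a,a₊]}·V̄⁰_a) ⊖ Y_a⁺`. -/
def Xplus (V₀ V₁ : Submodule ℝ (L2S J)) (a : ℝ) : Submodule ℝ (L2S J) :=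
  chiMul J (IccS ks a) (Vbar J ks V₀ a) ⊓ (Yplus J ks V₀ V₁ a)ᗮ

/-- `X_a⁻ := (χ_{[a₋,a]}·V̄⁰_a) ⊖ Y_a⁻`. -/
def Xminus (V₀ V₁ : Submodule ℝ (L2S J)) (a : ℝ) : Submodule ℝ (L2S J) :=
  chiMul J (IccP ks a) (Vbar J ks V₀ a) ⊓ (Yminus J ks V₀ V₁ a)ᗮ

/-- `T_a := (I − P_{V̄¹_a}) V̄⁰_a`. -/
def Tsp (V₀ V₁ : Submodule ℝ (L2S J)) (a : ℝ) : Submodule ℝ (L2S J) :=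
  oneSubProjSub (Vbar J ks V₁ a) (Vbar J ks V₀ a)

/-- `T_a⁻ := {f ∈ T_a : supp f ⊆ [a₋,a]}`. -/
def Tminus (V₀ V₁ : Submodule ℝ (L2S J)) (a : ℝ) : Submodule ℝ (L2S J) :=
  suppSub J (Tsp J ks V₀ V₁ a) (IccP ks a)

/-- `T_a⁺ := {f ∈ T_a : supp f ⊆ [a,a₊]}`. -/
def Tplus (V₀ V₁ : Submodule ℝ (L2S J)) (a : ℝ) : Submodule ℝ (L2S J) :=
  suppSub J (Tsp J ks V₀ V₁ a) (IccS ks a)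

/-- `U_a := T_a ⊖ (T_a⁻ ⊕ T_a⁺)`. -/
def Usp (V₀ V₁ : Submodule ℝ (L2S J)) (a : ℝ) : Submodule ℝ (L2S J) :=
  Tsp J ks V₀ V₁ a ⊓ (Tminus J ks V₀ V₁ a ⊔ Tplus J ks V₀ V₁ a)ᗮ

/-- `S_a := (χ_{[a,a₊]} − χ_{[a₋,a]})·U_a`. -/
def Ssp (V₀ V₁ : Submodule ℝ (L2S J)) (a : ℝ) : Submodule ℝ (L2S J) :=
  (Usp J ks V₀ V₁ a).map (indLM J (IccS ks a) - indLM J (IccP ks a))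

/-- `Ŵ_a := (I − P_{V̄⁰_a}) V̄¹_a`. -/
def What (V₀ V₁ : Submodule ℝ (L2S J)) (a : ℝ) : Submodule ℝ (L2S J) :=
  oneSubProjSub (Vbar J ks V₀ a) (Vbar J ks V₁ a)

/-- `W̃_a := W̄_a ⊖ Ŵ_a`. -/
def Wtilde (V₀ V₁ : Submodule ℝ (L2S J)) (a : ℝ) : Submodule ℝ (L2S J) :=
  Wbar J ks V₀ V₁ a ⊓ (What J ks V₀ V₁ a)ᗮ

end KnotWavelet
/-! Everything is local. By orthogonality and local finiteness, a function of `V` supported on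
`[a₋, a₊]` is a finite combination of basis functions, and the linear independence of the
restrictions to `[b, b₊]` excludes the functions of `Φ̄` that would stick out of a prescribed
support. Hence `P_{V̆¹_a} V⁰` is spanned by the projections of the functions of `Φ̆⁰_a`, `Φ̄⁰_a`
and `Φ̄⁰_{a₊}`, which give the three summands. For the orthogonality of `A_a⁺` and `A_{a₊}⁻`: the
projection onto `V̆_a` preserves inner products between `V_a` and `V_{a₊}`, for both bases, and
`P_{V̆⁰_a}` annihilates `V̄⁰_a`. -/

namespace KnotWavelet

open Submodule
open scoped InnerProductSpace

lemma isClosed_of_le_finiteDimensional {E : Type*} [NormedAddCommGroup E] [NormedSpace ℝ E]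
    {S T : Submodule ℝ E} [FiniteDimensional ℝ T] (h : S ≤ T) : IsClosed (S : Set E) :=
  have := finiteDimensional_of_le h
  closed_of_finiteDimensional S

section Projection

variable {H : Type*} [NormedAddCommGroup H] [InnerProductSpace ℝ H] [CompleteSpace H]
  (K : Submodule ℝ H)

lemma projL_apply (v : H) : projL K v = K.topologicalClosure.starProjection v := rfl

lemma projL_mem_topologicalClosure (v : H) : projL K v ∈ K.topologicalClosure :=
  K.topologicalClosure.starProjection_apply_mem v

lemma continuous_projL : Continuous (projL K) :=
  K.topologicalClosure.starProjection.continuous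

variable {K}

lemma projL_mem_of_le {N : Submodule ℝ H} (hKN : K ≤ N) (hN : IsClosed (N : Set H)) (v : H) :
    projL K v ∈ N :=
  topologicalClosure_minimal K hKN hN (projL_mem_topologicalClosure K v)

lemma projL_mem (hK : IsClosed (K : Set H)) (v : H) : projL K v ∈ K :=
  projL_mem_of_le le_rfl hK v

lemma projL_eq_self {v : H} (hv : v ∈ K) : projL K v = v :=
  starProjection_eq_self_iff.2 (K.le_topologicalClosure hv)

lemma projL_eq_zero {v : H} (hv : v ∈ Kᗮ) : projL K v = 0 := by
  rw [projL_apply, starProjection_apply_eq_zero_iff, orthogonal_closure]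
  exact hv

variable (K)

lemma sub_projL_mem_orthogonal (v : H) : v - projL K v ∈ Kᗮ :=
  orthogonal_closure K ▸ sub_starProjection_mem_orthogonal v

lemma inner_projL_projL (u v : H) :
    ⟪projL K u, projL K v⟫_ℝ = ⟪u, v⟫_ℝ - ⟪u - projL K u, v - projL K v⟫_ℝ := by
  have h₁ : ⟪projL K u, v - projL K v⟫_ℝ = 0 :=
    inner_right_of_mem_orthogonal (projL_mem_topologicalClosure K u)
      (sub_starProjection_mem_orthogonal v)
  have h₂ : ⟪u - projL K u, projL K v⟫_ℝ = 0 :=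
    inner_left_of_mem_orthogonal (projL_mem_topologicalClosure K v)
      (sub_starProjection_mem_orthogonal u)
  simp only [inner_sub_left, inner_sub_right] at h₁ h₂ ⊢
  linarith

variable {K}

lemma projSub_le {U : Submodule ℝ H} (hK : IsClosed (K : Set H)) : projSub K U ≤ K := by
  rintro _ ⟨v, -, rfl⟩
  exact projL_mem hK v

lemma perpSub_projSub {N U : Submodule ℝ H} (hNK : N ≤ K) (hU : U ≤ Nᗮ) :
    PerpSub N (projSub K U) := by
  rintro f hf _ ⟨u, hu, rfl⟩
  rw [projL_apply, ← inner_starProjection_left_eq_right, ← projL_apply, projL_eq_self (hNK hf)]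
  exact inner_right_of_mem_orthogonal hf (hU hu)

lemma projL_mem_sup_projSub_oneSubProjSub {X M N U : Submodule ℝ H} (hN : IsClosed (N : Set H))
    (hM : M ≤ N.comap (projL X)) {f : H} (hf : f ∈ U) :
    projL X f ∈ N ⊔ projSub X (oneSubProjSub M U) := by
  rw [← sub_add_cancel f (projL M f), map_add]
  exact add_mem (mem_sup_right ⟨f - projL M f, ⟨f, hf, rfl⟩, rfl⟩)
    (mem_sup_left (projL_mem_of_le hM (hN.preimage (continuous_projL X)) f))

end Projection

section OrthogonalFamily

variable {H : Type*} [NormedAddCommGroup H] [InnerProductSpace ℝ H] {Φ : Set H}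

lemma mem_span_setOf_inner_ne_zero (hΦ : Φ.Pairwise fun φ ψ => ⟪φ, ψ⟫_ℝ = 0) {f : H}
    (hf : f ∈ (span ℝ Φ).topologicalClosure) (hfin : {φ ∈ Φ | ⟪f, φ⟫_ℝ ≠ 0}.Finite) :
    f ∈ span ℝ {φ ∈ Φ | ⟪f, φ⟫_ℝ ≠ 0} := by
  set F := {φ ∈ Φ | ⟪f, φ⟫_ℝ ≠ 0}
  have : FiniteDimensional ℝ (span ℝ F) := FiniteDimensional.span_of_finite ℝ hfin
  set u := (span ℝ F).starProjection f
  have hu : u ∈ span ℝ F := starProjection_apply_mem _ f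
  have horth : ∀ φ ∈ Φ, ⟪φ, f - u⟫_ℝ = 0 := by
    intro φ hφ
    rw [real_inner_comm]
    by_cases hφF : φ ∈ F
    · exact starProjection_inner_eq_zero f φ (subset_span hφF)
    · have hfφ : ⟪f, φ⟫_ℝ = 0 := not_not.1 fun h => hφF ⟨hφ, h⟩
      have huφ : ⟪u, φ⟫_ℝ = 0 :=
        (isOrtho_span.2 fun ψ hψ φ' hφ' => (mem_singleton_iff.1 hφ') ▸
          hΦ hψ.1 hφ fun h => hφF (h ▸ hψ)).inner_eq hu (mem_span_singleton_self φ)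
      rw [inner_sub_left, hfφ, huφ, sub_zero]
  have hclosure : f - u ∈ (span ℝ Φ).topologicalClosure :=
    sub_mem hf (le_topologicalClosure _ (span_mono (sep_subset _ _) hu))
  have hperp : f - u ∈ (span ℝ Φ).topologicalClosureᗮ := by
    rw [orthogonal_closure, mem_orthogonal]
    intro w hw
    refine (isOrtho_span.2 fun φ hφ v hv => ?_).inner_eq hw (mem_span_singleton_self (f - u))
    rw [mem_singleton_iff.1 hv]
    exact horth φ hφ
  have : f - u = 0 := inner_self_eq_zero.1 (inner_right_of_mem_orthogonal hclosure hperp)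
  rwa [sub_eq_zero.1 this]

end OrthogonalFamily

lemma mem_span_of_mem_span_union {R M : Type*} [Ring R] [AddCommGroup M] [Module R M]
    {A B : Set M} {P : Submodule R M} {f : M} (hf : f ∈ span R (A ∪ B)) (hfP : f ∈ P)
    (hAP : A ⊆ P) (hB : ∀ r ∈ span R B, r ∈ P → r = 0) : f ∈ span R A := by
  rw [span_union, Submodule.mem_sup] at hf
  obtain ⟨u, hu, r, hr, rfl⟩ := hf
  have hrP : r ∈ P := by simpa using P.sub_mem hfP (span_le.2 hAP hu)
  rwa [hB r hr hrP, add_zero]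

section Support

variable {J : Set ℝ} {f g : L2S J} {I I' : Set ℝ}

lemma ae_restrict_ne (c : ℝ) : ∀ᵐ x ∂volume.restrict J, x ≠ c :=
  (countable_singleton c).ae_notMem _

lemma SuppIn.mono_ae (h : SuppIn J f I) (hI : ∀ᵐ x ∂volume.restrict J, x ∈ I → x ∈ I') :
    SuppIn J f I' := by
  filter_upwards [h, hI] with x hx hxI hxI'
  exact hx fun h => hxI' (hxI h)

lemma SuppIn.mono (h : SuppIn J f I) (hI : I ⊆ I') : SuppIn J f I' :=
  h.mono_ae (ae_of_all _ hI)

lemma SuppIn.compl_of_inter_subset {c : ℝ} (h : SuppIn J f I) (hI : I ∩ I' ⊆ {c}) :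
    SuppIn J f I'ᶜ := by
  filter_upwards [h, ae_restrict_ne c] with x hx hxc hxI'
  exact hx fun hxI => hxc (hI ⟨hxI, not_not.1 hxI'⟩)

lemma inner_eq_zero_of_suppIn_compl (hf : SuppIn J f I) (hg : SuppIn J g Iᶜ) : ⟪f, g⟫_ℝ = 0 := by
  rw [L2.inner_def]
  refine integral_eq_zero_of_ae ?_
  filter_upwards [hf, hg] with x hfx hgx
  by_cases hx : x ∈ I
  · simp [hgx (not_not.2 hx)]
  · simp [hfx hx]

lemma inner_eq_zero_of_suppIn {c : ℝ} (hf : SuppIn J f I) (hg : SuppIn J g I')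
    (hI : I ∩ I' ⊆ {c}) : ⟪f, g⟫_ℝ = 0 :=
  inner_eq_zero_of_suppIn_compl hf (hg.compl_of_inter_subset (by rwa [inter_comm]))

lemma indL2_eq_zero (hI : MeasurableSet I) (hf : SuppIn J f Iᶜ) : indL2 J I f = 0 := by
  have hae : I.indicator f =ᵐ[volume.restrict J] (0 : ℝ → ℝ) := by
    filter_upwards [hf] with x hx
    by_cases hxI : x ∈ I
    · simp [indicator_of_mem hxI, hx (not_not.2 hxI)]
    · simp [indicator_of_notMem hxI]
  unfold indL2
  rw [dif_pos hI, show ((Lp.memLp f).indicator hI).toLp (I.indicator f) =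
    MemLp.zero.toLp (0 : ℝ → ℝ) from (MemLp.toLp_eq_toLp_iff _ _).2 hae, MemLp.toLp_zero]

end Support

lemma Iic_inter_Ici_subset {a b : ℝ} (h : a ≤ b) : Iic a ∩ Ici b ⊆ {a} :=
  fun _ hx => le_antisymm hx.1 (h.trans hx.2)

section Knots

variable {J ks : Set ℝ} {a a' b c x : ℝ}

lemma le_succE (ks : Set ℝ) (a : ℝ) : (a : EReal) ≤ succE ks a :=
  le_sInf (by rintro _ ⟨x, ⟨-, hx⟩, rfl⟩; exact EReal.coe_le_coe_iff.2 hx.le)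

lemma predE_le (ks : Set ℝ) (a : ℝ) : predE ks a ≤ (a : EReal) :=
  sSup_le (by rintro _ ⟨x, ⟨-, hx⟩, rfl⟩; exact EReal.coe_le_coe_iff.2 hx.le)

lemma succE_le_s8 (hc : c ∈ ks) (hbc : b < c) : succE ks b ≤ (c : EReal) :=
  sInf_le ⟨c, ⟨hc, hbc⟩, rfl⟩

lemma le_predE (hb : b ∈ ks) (hbc : b < c) : (b : EReal) ≤ predE ks c :=
  le_sSup ⟨b, ⟨hb, hbc⟩, rfl⟩

lemma IccS_subset_IccPS : IccS ks c ⊆ IccPS ks c :=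
  fun _ hx => ⟨(predE_le ks c).trans (EReal.coe_le_coe_iff.2 hx.1), hx.2⟩

lemma IccP_subset_IccPS : IccP ks c ⊆ IccPS ks c :=
  fun _ hx => ⟨hx.1, (EReal.coe_le_coe_iff.2 hx.2).trans (le_succE ks c)⟩

lemma IccP_inter_IccS_subset : IccP ks c ∩ IccS ks c ⊆ {c} :=
  fun _ hx => le_antisymm hx.1.2 hx.2.1

lemma measurableSet_IccS (ks : Set ℝ) (a : ℝ) : MeasurableSet (IccS ks a) :=
  Set.OrdConnected.measurableSet
    ⟨fun _ hx _ hy _ hz => ⟨hx.1.trans hz.1, (EReal.coe_le_coe_iff.2 hz.2).trans hy.2⟩⟩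

namespace IsSucc

lemma succE_eq_s8 (hs : IsSucc ks a a') : succE ks a = a' :=
  le_antisymm (succE_le_s8 hs.2.1 hs.2.2.1) <| le_sInf <| by
    rintro _ ⟨x, ⟨hx, hax⟩, rfl⟩
    exact EReal.coe_le_coe_iff.2 ((hs.2.2.2 x hx).resolve_left hax.not_ge)

lemma predE_eq (hs : IsSucc ks a a') : predE ks a' = a :=
  le_antisymm
    (sSup_le <| by
      rintro _ ⟨x, ⟨hx, hxa'⟩, rfl⟩
      exact EReal.coe_le_coe_iff.2 ((hs.2.2.2 x hx).resolve_right hxa'.not_ge))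
    (le_predE hs.1 hs.2.2.1)

lemma succR_eq_s8 (hs : IsSucc ks a a') : succR ks a = a' :=
  IsLeast.csInf_eq ⟨⟨hs.2.1, hs.2.2.1⟩, fun b hb => (hs.2.2.2 b hb.1).resolve_left hb.2.not_ge⟩

lemma IccS_eq (hs : IsSucc ks a a') : IccS ks a = Icc a a' := by
  ext x
  simp [IccS, hs.succE_eq_s8]

lemma IccP_eq (hs : IsSucc ks a a') : IccP ks a' = Icc a a' := by
  ext x
  simp [IccP, hs.predE_eq]

lemma IccPS_subset_Iic (hs : IsSucc ks a a') : IccPS ks a ⊆ Iic a' :=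
  fun _ hx => EReal.coe_le_coe_iff.1 (hx.2.trans_eq hs.succE_eq_s8)

lemma IccPS_subset_Ici (hs : IsSucc ks a a') : IccPS ks a' ⊆ Ici a :=
  fun _ hx => EReal.coe_le_coe_iff.1 (hs.predE_eq ▸ hx.1)

end IsSucc

namespace IsKnotSeq

lemma le_of_mem_lowerBounds (hks : IsKnotSeq J ks) (hc : c ∈ lowerBounds ks) (hx : x ∈ J) :
    c ≤ x := by
  have h : (c : EReal) ≤ sInf ((fun x : ℝ => (x : EReal)) '' ks) :=
    le_sInf (by rintro _ ⟨y, hy, rfl⟩; exact EReal.coe_le_coe_iff.2 (hc hy))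
  exact EReal.coe_le_coe_iff.1 ((h.trans_eq hks.inf_eq).trans (sInf_le ⟨x, hx, rfl⟩))

lemma le_of_mem_upperBounds (hks : IsKnotSeq J ks) (hc : c ∈ upperBounds ks) (hx : x ∈ J) :
    x ≤ c := by
  have h : sSup ((fun x : ℝ => (x : EReal)) '' ks) ≤ c :=
    sSup_le (by rintro _ ⟨y, hy, rfl⟩; exact EReal.coe_le_coe_iff.2 (hc hy))
  have hx' : (x : EReal) ≤ sSup ((fun x : ℝ => (x : EReal)) '' J) := le_sSup ⟨x, hx, rfl⟩
  exact EReal.coe_le_coe_iff.1 (hx'.trans (hks.sup_eq ▸ h))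

/-- The supremum of the knots below `c` is a knot, since otherwise it would be a cluster
point of `ks` in `J`. -/
lemma exists_isSucc_of_lt (hJ : J.OrdConnected) (hks : IsKnotSeq J ks) (hb : b ∈ ks)
    (hc : c ∈ ks) (hbc : b < c) : ∃ p, IsSucc ks p c := by
  set S := {x ∈ ks | x < c}
  have hS : S.Nonempty := ⟨b, hb, hbc⟩
  have hbdd : BddAbove S := ⟨c, fun x hx => hx.2.le⟩
  have hpS : sSup S ∈ S := by
    by_contra hpS
    have hpJ : sSup S ∈ J := hJ.out (hks.subset hb) (hks.subset hc)
      ⟨le_csSup hbdd ⟨hb, hbc⟩, csSup_le hS fun x hx => hx.2.le⟩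
    refine hks.noCluster _ hpJ (accPt_iff_frequently_nhdsNE.2 ?_)
    have hfreq := frequently_nhdsWithin_iff.1 ((isLUB_csSup hS hbdd).frequently_mem hS)
    refine frequently_nhdsWithin_iff.2 (hfreq.mono fun x hx => ⟨hx.1.1, ?_⟩)
    rintro rfl
    exact hpS hx.1
  exact ⟨sSup S, hpS.1, hc, hpS.2,
    fun x hx => (lt_or_ge x c).imp (fun h => le_csSup hbdd ⟨hx, h⟩) id⟩

lemma ae_mem_Icc_of_mem_IccPS (hks : IsKnotSeq J ks) (hJ : MeasurableSet J) (hc : c ∈ ks) :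
    ∃ p ∈ ks, ∃ q ∈ ks, ∀ᵐ x ∂volume.restrict J, x ∈ IccPS ks c → x ∈ Icc p q := by
  obtain ⟨p, hp, hpc⟩ : ∃ p ∈ ks, ∀ x ∈ J, x ∈ IccPS ks c → p ≤ x := by
    by_cases h : ∃ b ∈ ks, b < c
    · obtain ⟨b, hb, hbc⟩ := h
      exact ⟨b, hb, fun x _ hx => EReal.coe_le_coe_iff.1 ((le_predE hb hbc).trans hx.1)⟩
    · push Not at h
      exact ⟨c, hc, fun x hxJ _ => hks.le_of_mem_lowerBounds h hxJ⟩
  obtain ⟨q, hq, hqc⟩ : ∃ q ∈ ks, ∀ x ∈ J, x ∈ IccPS ks c → x ≤ q := by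
    by_cases h : ∃ b ∈ ks, c < b
    · obtain ⟨b, hb, hcb⟩ := h
      exact ⟨b, hb, fun x _ hx => EReal.coe_le_coe_iff.1 (hx.2.trans (succE_le_s8 hb hcb))⟩
    · push Not at h
      exact ⟨c, hc, fun x hxJ _ => hks.le_of_mem_upperBounds h hxJ⟩
  refine ⟨p, hp, q, hq, ?_⟩
  filter_upwards [ae_restrict_mem hJ] with x hxJ hx using ⟨hpc x hxJ hx, hqc x hxJ hx⟩

end IsKnotSeq

end Knots

section CenteredBasis

variable {J ks : Set ℝ} {Φ : Set (L2S J)} {a a' c : ℝ} {φ r : L2S J}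

lemma barAt_disjoint (hs : IsSucc ks a a') : Disjoint (barAt J ks Φ a) (barAt J ks Φ a') := by
  refine disjoint_left.2 fun φ hφ hφ' => hφ.2 ⟨hφ.1.1.1, ?_⟩
  filter_upwards [hφ.1.1.2, hφ'.1.1.2] with x h h' hx
  by_cases hxa : x ∈ IccPS ks a
  · refine h' fun hxa' => hx ?_
    rw [hs.IccS_eq]
    exact ⟨hs.IccPS_subset_Ici hxa', hs.IccPS_subset_Iic hxa⟩
  · exact h hxa

lemma barAt_eq_empty (hJ : J.OrdConnected) (hks : IsKnotSeq J ks) (hc : c ∈ lowerBounds ks) :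
    barAt J ks Φ c = ∅ := by
  refine eq_empty_of_forall_notMem fun φ hφ => hφ.2 ⟨hφ.1.1.1, hφ.1.1.2.mono_ae ?_⟩
  filter_upwards [ae_restrict_mem hJ.measurableSet] with x hxJ hx
  exact ⟨hks.le_of_mem_lowerBounds hc hxJ, hx.2⟩

namespace CenteredBasis

lemma suppIn_Iic_or_mem_or_suppIn_Ici (hΦ : CenteredBasis J ks Φ) (hs : IsSucc ks a a')
    (hφ : φ ∈ Φ) :
    SuppIn J φ (Iic a) ∨ φ ∈ breveAt J ks Φ a ∨ φ ∈ barAt J ks Φ a ∨ φ ∈ barAt J ks Φ a' ∨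
      SuppIn J φ (Ici a') := by
  obtain ⟨b, hb, hφb⟩ := mem_iUnion₂.1 (hΦ.2.1.le hφ)
  have hsupp : SuppIn J φ (IccPS ks b) := hφb.1.2
  obtain ⟨ha, ha', -, hgap⟩ := hs
  rcases hgap b hb with hba | hab
  · rcases hba.lt_or_eq with hba | rfl
    · exact Or.inl <| hsupp.mono fun x hx => EReal.coe_le_coe_iff.1 (hx.2.trans (succE_le_s8 ha hba))
    · by_cases hφ' : φ ∈ breveAt J ks Φ b
      · exact Or.inr (Or.inl hφ')
      · exact Or.inr (Or.inr (Or.inl ⟨hφb, hφ'⟩))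
  · rcases hab.lt_or_eq with hab | rfl
    · refine Or.inr (Or.inr (Or.inr (Or.inr (hsupp.mono fun x hx => ?_))))
      exact EReal.coe_le_coe_iff.1 ((le_predE ha' hab).trans hx.1)
    · by_cases hφ' : φ ∈ breveAt J ks Φ a'
      · exact Or.inr (Or.inr (Or.inr (Or.inr (hφ'.2.mono fun x hx => hx.1))))
      · exact Or.inr (Or.inr (Or.inr (Or.inl ⟨hφb, hφ'⟩)))

lemma eq_zero_of_mem_span_of_indL2_eq_zero (hΦ : CenteredBasis J ks Φ) (hc : c ∈ ks)
    {S : Set (L2S J)} (hS : S ⊆ midAt J ks Φ c ∪ barSucc J ks Φ c) (hr : r ∈ span ℝ S)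
    (hr0 : indL2 J (IccS ks c) r = 0) : r = 0 := by
  have hdisj := range_ker_disjoint (f := indLM J (IccS ks c)) (hΦ.2.2 c hc)
  rw [Subtype.range_coe] at hdisj
  exact disjoint_def.1 hdisj r (span_mono hS hr) hr0

lemma eq_zero_of_mem_span_barAt_of_suppIn_Iic (hΦ : CenteredBasis J ks Φ) (hc : c ∈ ks)
    (hr : r ∈ span ℝ (barAt J ks Φ c)) (hrc : SuppIn J r (Iic c)) : r = 0 :=
  hΦ.eq_zero_of_mem_span_of_indL2_eq_zero hc (fun _ hφ => Or.inl hφ.1) hr <|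
    indL2_eq_zero (measurableSet_IccS ks c) <|
      hrc.compl_of_inter_subset fun _ hx => le_antisymm hx.1 hx.2.1

lemma eq_zero_of_mem_span_barAt_of_suppIn_Ici (hJ : J.OrdConnected) (hks : IsKnotSeq J ks)
    (hΦ : CenteredBasis J ks Φ) (hc : c ∈ ks) (hr : r ∈ span ℝ (barAt J ks Φ c))
    (hrc : SuppIn J r (Ici c)) : r = 0 := by
  by_cases hb : ∃ b ∈ ks, b < c
  · obtain ⟨b, hb, hbc⟩ := hb
    obtain ⟨p, hp⟩ := hks.exists_isSucc_of_lt hJ hb hc hbc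
    refine hΦ.eq_zero_of_mem_span_of_indL2_eq_zero hp.1 (fun φ hφ => Or.inr ?_) hr <|
      indL2_eq_zero (measurableSet_IccS ks p) <| hrc.compl_of_inter_subset (c := c) fun x hx => ?_
    · rwa [barSucc, if_pos ⟨c, hc, hp.2.2.1⟩, hp.succR_eq_s8]
    · rw [hp.IccS_eq] at hx
      exact le_antisymm hx.2.2 hx.1
  · push Not at hb
    rw [barAt_eq_empty hJ hks hb, span_empty, Submodule.mem_bot] at hr
    exact hr

end CenteredBasis

lemma exists_finite_inner_ne_zero_subset (hJ : J.OrdConnected) (hks : IsKnotSeq J ks)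
    (hΦ : LocFin J Φ) (hc : c ∈ ks) :
    ∃ F : Set (L2S J), F.Finite ∧
      ∀ f : L2S J, SuppIn J f (IccPS ks c) → {φ ∈ Φ | ⟪f, φ⟫_ℝ ≠ 0} ⊆ F := by
  obtain ⟨p, hp, q, hq, hpq⟩ := hks.ae_mem_Icc_of_mem_IccPS hJ.measurableSet hc
  refine ⟨_, hΦ _ isCompact_Icc (hJ.out (hks.subset hp) (hks.subset hq)), fun f hf φ hφ => ?_⟩
  refine ⟨hφ.1, fun hφ0 => hφ.2 (inner_eq_zero_of_suppIn_compl (hf.mono_ae hpq) ?_)⟩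
  filter_upwards [hφ0] with x hx hxc using hx (not_not.1 hxc)

end CenteredBasis

section Subspaces

variable {J ks : Set ℝ} {a a' c : ℝ} {V W : Submodule ℝ (L2S J)}

lemma Vmid_le : Vmid J ks V c ≤ V := fun _ hf => hf.1

lemma Vmid_mono (h : V ≤ W) : Vmid J ks V c ≤ Vmid J ks W c := fun _ hf => ⟨h hf.1, hf.2⟩

lemma Vbreve_mono (h : V ≤ W) : Vbreve J ks V c ≤ Vbreve J ks W c := fun _ hf => ⟨h hf.1, hf.2⟩

lemma Vbreve_le_Vmid : Vbreve J ks V c ≤ Vmid J ks V c :=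
  fun _ hf => ⟨hf.1, hf.2.mono IccS_subset_IccPS⟩

lemma VbrevePred_le : VbrevePred J ks V c ≤ suppSub J V (IccP ks c) := by
  unfold VbrevePred
  split_ifs
  exacts [le_rfl, bot_le]

lemma VbrevePred_le_Vmid : VbrevePred J ks V c ≤ Vmid J ks V c :=
  VbrevePred_le.trans fun _ hf => ⟨hf.1, hf.2.mono IccP_subset_IccPS⟩

lemma IsSucc.VbrevePred_eq (hs : IsSucc ks a a') (V : Submodule ℝ (L2S J)) :
    VbrevePred J ks V a' = Vbreve J ks V a := by
  rw [VbrevePred, if_pos ⟨a, hs.1, hs.2.2.1⟩, hs.IccP_eq, ← hs.IccS_eq]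
  rfl

lemma IsSucc.Aminus_eq (hs : IsSucc ks a a') (V₀ V₁ : Submodule ℝ (L2S J)) :
    Aminus J ks V₀ V₁ a' = projSub (Vbreve J ks V₁ a) (Vbar J ks V₀ a') := by
  rw [Aminus, hs.VbrevePred_eq]

lemma Vbar_le_orthogonal : Vbar J ks V c ≤ (VbrevePred J ks V c ⊔ Vbreve J ks V c)ᗮ := by
  rintro _ ⟨f, -, rfl⟩
  exact sub_projL_mem_orthogonal _ f

lemma Vbar_le_Vmid (hV : IsClosed (Vmid J ks V c : Set (L2S J))) :
    Vbar J ks V c ≤ Vmid J ks V c := by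
  rintro _ ⟨f, hf, rfl⟩
  exact sub_mem hf (projL_mem_of_le (sup_le VbrevePred_le_Vmid Vbreve_le_Vmid) hV f)

lemma projL_Vbreve_eq_zero {g : L2S J} {I : Set ℝ} (hg : SuppIn J g I)
    (hI : I ∩ IccS ks a ⊆ {c}) : projL (Vbreve J ks V a) g = 0 :=
  projL_eq_zero fun _ hu => inner_eq_zero_of_suppIn hu.2 hg (by rwa [inter_comm])

end Subspaces

section OrthoCenteredBasis

variable {J ks : Set ℝ} {Φ : Set (L2S J)} {a a' c : ℝ}

lemma mem_SClos {φ : L2S J} (hφ : φ ∈ Φ) : φ ∈ SClos J Φ :=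
  le_topologicalClosure _ (subset_span hφ)

lemma mem_span_setOf_inner_ne_zero_of_mem_Vmid (hJ : J.OrdConnected) (hks : IsKnotSeq J ks)
    (hΦ : OrthoCenteredBasis J ks Φ) (hc : c ∈ ks) {f : L2S J}
    (hf : f ∈ Vmid J ks (SClos J Φ) c) : f ∈ span ℝ {φ ∈ Φ | ⟪f, φ⟫_ℝ ≠ 0} := by
  obtain ⟨F, hF, hsub⟩ := exists_finite_inner_ne_zero_subset hJ hks hΦ.1.1 hc
  exact mem_span_setOf_inner_ne_zero hΦ.2 hf.1 (hF.subset (hsub f hf.2))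

lemma finiteDimensional_Vmid (hJ : J.OrdConnected) (hks : IsKnotSeq J ks)
    (hΦ : OrthoCenteredBasis J ks Φ) (hc : c ∈ ks) :
    FiniteDimensional ℝ (Vmid J ks (SClos J Φ) c) := by
  obtain ⟨F, hF, hsub⟩ := exists_finite_inner_ne_zero_subset hJ hks hΦ.1.1 hc
  have := FiniteDimensional.span_of_finite ℝ hF
  exact finiteDimensional_of_le fun f hf =>
    span_mono (hsub f hf.2) (mem_span_setOf_inner_ne_zero_of_mem_Vmid hJ hks hΦ hc hf)

lemma isClosed_Vmid (hJ : J.OrdConnected) (hks : IsKnotSeq J ks)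
    (hΦ : OrthoCenteredBasis J ks Φ) (hc : c ∈ ks) :
    IsClosed (Vmid J ks (SClos J Φ) c : Set (L2S J)) :=
  have := finiteDimensional_Vmid hJ hks hΦ hc
  closed_of_finiteDimensional _

lemma finiteDimensional_Vbreve (hJ : J.OrdConnected) (hks : IsKnotSeq J ks)
    (hΦ : OrthoCenteredBasis J ks Φ) (hc : c ∈ ks) :
    FiniteDimensional ℝ (Vbreve J ks (SClos J Φ) c) :=
  have := finiteDimensional_Vmid hJ hks hΦ hc
  finiteDimensional_of_le Vbreve_le_Vmid

lemma isClosed_Vbreve (hJ : J.OrdConnected) (hks : IsKnotSeq J ks)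
    (hΦ : OrthoCenteredBasis J ks Φ) (hc : c ∈ ks) :
    IsClosed (Vbreve J ks (SClos J Φ) c : Set (L2S J)) :=
  have := finiteDimensional_Vbreve hJ hks hΦ hc
  closed_of_finiteDimensional _

lemma mem_span_suppIn_Iic_union_barAt (hJ : J.OrdConnected) (hks : IsKnotSeq J ks)
    (hΦ : OrthoCenteredBasis J ks Φ) (hs : IsSucc ks a a') {z : L2S J}
    (hz : z ∈ Vmid J ks (SClos J Φ) a) (hzX : z ∈ (Vbreve J ks (SClos J Φ) a)ᗮ) :
    z ∈ span ℝ ({φ ∈ Φ | SuppIn J φ (Iic a)} ∪ barAt J ks Φ a) := by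
  refine mem_span_of_mem_span_union (B := barAt J ks Φ a') (P := suppSub J ⊤ (Iic a'))
    (span_mono ?_ (mem_span_setOf_inner_ne_zero_of_mem_Vmid hJ hks hΦ hs.1 hz))
    ⟨trivial, hz.2.mono hs.IccPS_subset_Iic⟩ ?_
    fun r hr hrP => hΦ.1.eq_zero_of_mem_span_barAt_of_suppIn_Iic hs.2.1 hr hrP.2
  · rintro φ ⟨hφ, hzφ⟩
    rcases hΦ.1.suppIn_Iic_or_mem_or_suppIn_Ici hs hφ with h | h | h | h | h
    · exact Or.inl (Or.inl ⟨hφ, h⟩)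
    · exact absurd ((real_inner_comm φ z).trans (hzX φ ⟨mem_SClos hφ, h.2⟩)) hzφ
    · exact Or.inl (Or.inr h)
    · exact Or.inr h
    · exact absurd (inner_eq_zero_of_suppIn hz.2 h fun x hx =>
        le_antisymm (hs.IccPS_subset_Iic hx.1) hx.2) hzφ
  · rintro φ (⟨-, h⟩ | h)
    · exact ⟨trivial, h.mono (Iic_subset_Iic.2 hs.2.2.1.le)⟩
    · exact ⟨trivial, h.1.1.2.mono hs.IccPS_subset_Iic⟩

lemma mem_span_suppIn_Ici_union_barAt (hJ : J.OrdConnected) (hks : IsKnotSeq J ks)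
    (hΦ : OrthoCenteredBasis J ks Φ) (hs : IsSucc ks a a') {z : L2S J}
    (hz : z ∈ Vmid J ks (SClos J Φ) a') (hzX : z ∈ (Vbreve J ks (SClos J Φ) a)ᗮ) :
    z ∈ span ℝ ({φ ∈ Φ | SuppIn J φ (Ici a')} ∪ barAt J ks Φ a') := by
  refine mem_span_of_mem_span_union (B := barAt J ks Φ a) (P := suppSub J ⊤ (Ici a))
    (span_mono ?_ (mem_span_setOf_inner_ne_zero_of_mem_Vmid hJ hks hΦ hs.2.1 hz))
    ⟨trivial, hz.2.mono hs.IccPS_subset_Ici⟩ ?_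
    fun r hr hrP => hΦ.1.eq_zero_of_mem_span_barAt_of_suppIn_Ici hJ hks hs.1 hr hrP.2
  · rintro φ ⟨hφ, hzφ⟩
    rcases hΦ.1.suppIn_Iic_or_mem_or_suppIn_Ici hs hφ with h | h | h | h | h
    · exact absurd (inner_eq_zero_of_suppIn hz.2 h fun x hx =>
        le_antisymm hx.2 (hs.IccPS_subset_Ici hx.1)) hzφ
    · exact absurd ((real_inner_comm φ z).trans (hzX φ ⟨mem_SClos hφ, h.2⟩)) hzφ
    · exact Or.inr h
    · exact Or.inl (Or.inr h)
    · exact Or.inl (Or.inl ⟨hφ, h⟩)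
  · rintro φ (⟨-, h⟩ | h)
    · exact ⟨trivial, h.mono (Ici_subset_Ici.2 hs.2.2.1.le)⟩
    · exact ⟨trivial, h.1.1.2.mono hs.IccPS_subset_Ici⟩

/-- The components of `f` and `g` orthogonal to `V̆_a` are spanned by basis functions on
opposite sides of `[a, a']`, up to the disjoint families `Φ̄_a` and `Φ̄_{a'}`. -/
lemma inner_projL_Vbreve (hJ : J.OrdConnected) (hks : IsKnotSeq J ks)
    (hΦ : OrthoCenteredBasis J ks Φ) (hs : IsSucc ks a a') {f g : L2S J}
    (hf : f ∈ Vmid J ks (SClos J Φ) a) (hg : g ∈ Vmid J ks (SClos J Φ) a') :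
    ⟪projL (Vbreve J ks (SClos J Φ) a) f, projL (Vbreve J ks (SClos J Φ) a) g⟫_ℝ = ⟪f, g⟫_ℝ := by
  set X := Vbreve J ks (SClos J Φ) a
  have hX : IsClosed (X : Set (L2S J)) := isClosed_Vbreve hJ hks hΦ hs.1
  have hz : f - projL X f ∈ Vmid J ks (SClos J Φ) a :=
    sub_mem hf (Vbreve_le_Vmid (projL_mem hX f))
  have hz' : g - projL X g ∈ Vmid J ks (SClos J Φ) a' :=
    sub_mem hg (VbrevePred_le_Vmid ((hs.VbrevePred_eq _).symm ▸ projL_mem hX g))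
  have hperp : span ℝ ({φ ∈ Φ | SuppIn J φ (Iic a)} ∪ barAt J ks Φ a) ⟂
      span ℝ ({φ ∈ Φ | SuppIn J φ (Ici a')} ∪ barAt J ks Φ a') := by
    refine isOrtho_span.2 ?_
    rintro φ (⟨-, hφ⟩ | hφ) ψ (⟨-, hψ⟩ | hψ)
    · exact inner_eq_zero_of_suppIn hφ hψ (Iic_inter_Ici_subset hs.2.2.1.le)
    · exact inner_eq_zero_of_suppIn hφ (hψ.1.1.2.mono hs.IccPS_subset_Ici)
        (Iic_inter_Ici_subset le_rfl)
    · exact inner_eq_zero_of_suppIn (hφ.1.1.2.mono hs.IccPS_subset_Iic) hψ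
        (Iic_inter_Ici_subset le_rfl)
    · exact hΦ.2 hφ.1.1.1 hψ.1.1.1 ((barAt_disjoint hs).ne_of_mem hφ hψ)
  rw [inner_projL_projL, hperp.inner_eq
    (mem_span_suppIn_Iic_union_barAt hJ hks hΦ hs hz (sub_projL_mem_orthogonal X f))
    (mem_span_suppIn_Ici_union_barAt hJ hks hΦ hs hz' (sub_projL_mem_orthogonal X g)), sub_zero]

end OrthoCenteredBasis

section Decomposition

variable {J ks : Set ℝ} {Φ₀ Φ₁ : Set (L2S J)} {a a' : ℝ}

lemma perpSub_Aplus_Aminus (hJ : J.OrdConnected) (hks : IsKnotSeq J ks)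
    (h₀ : OrthoCenteredBasis J ks Φ₀) (h₁ : OrthoCenteredBasis J ks Φ₁)
    (hle : SClos J Φ₀ ≤ SClos J Φ₁) (hs : IsSucc ks a a') :
    PerpSub (Aplus J ks (SClos J Φ₀) (SClos J Φ₁) a)
      (Aminus J ks (SClos J Φ₀) (SClos J Φ₁) a') := by
  rw [hs.Aminus_eq]
  rintro _ ⟨y, hy, rfl⟩ _ ⟨y', hy', rfl⟩
  have hyV := Vbar_le_Vmid (isClosed_Vmid hJ hks h₀ hs.1) hy
  have hy'V := Vbar_le_Vmid (isClosed_Vmid hJ hks h₀ hs.2.1) hy'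
  calc ⟪projL (Vbreve J ks (SClos J Φ₁) a) y, projL (Vbreve J ks (SClos J Φ₁) a) y'⟫_ℝ
      = ⟪y, y'⟫_ℝ := inner_projL_Vbreve hJ hks h₁ hs (Vmid_mono hle hyV) (Vmid_mono hle hy'V)
    _ = ⟪projL (Vbreve J ks (SClos J Φ₀) a) y, projL (Vbreve J ks (SClos J Φ₀) a) y'⟫_ℝ :=
      (inner_projL_Vbreve hJ hks h₀ hs hyV hy'V).symm
    _ = 0 := by
      rw [projL_eq_zero (orthogonal_le le_sup_right (Vbar_le_orthogonal hy)), inner_zero_left]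

lemma projSub_Vbreve_le_sup (hJ : J.OrdConnected) (hks : IsKnotSeq J ks)
    (h₀ : OrthoCenteredBasis J ks Φ₀) {V₁ : Submodule ℝ (L2S J)}
    [FiniteDimensional ℝ (Vbreve J ks V₁ a)] (hle : SClos J Φ₀ ≤ V₁) (hs : IsSucc ks a a') :
    projSub (Vbreve J ks V₁ a) (SClos J Φ₀) ≤
      Vbreve J ks (SClos J Φ₀) a ⊔ Aplus J ks (SClos J Φ₀) V₁ a ⊔
        Aminus J ks (SClos J Φ₀) V₁ a' := by
  rw [hs.Aminus_eq]
  set X := Vbreve J ks V₁ a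
  set N := Vbreve J ks (SClos J Φ₀) a
  have hX : IsClosed (X : Set (L2S J)) := closed_of_finiteDimensional X
  have hN : IsClosed (N : Set (L2S J)) := isClosed_Vbreve hJ hks h₀ hs.1
  have hRHS : IsClosed ((N ⊔ Aplus J ks (SClos J Φ₀) V₁ a ⊔
      projSub X (Vbar J ks (SClos J Φ₀) a') : Submodule ℝ (L2S J)) : Set (L2S J)) :=
    isClosed_of_le_finiteDimensional
      (sup_le (sup_le (Vbreve_mono hle) (projSub_le hX)) (projSub_le hX))
  have hid : N ≤ N.comap (projL X) := fun g hg => by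
    rw [Submodule.mem_comap, projL_eq_self (Vbreve_mono hle hg)]
    exact hg
  have hzero : ∀ {I : Set ℝ} {c : ℝ}, I ∩ IccS ks a ⊆ {c} →
      suppSub J (SClos J Φ₀) I ≤ N.comap (projL X) := fun hI g hg => by
    rw [Submodule.mem_comap, projL_Vbreve_eq_zero hg.2 hI]
    exact zero_mem N
  have hleft : Iic a ∩ IccS ks a ⊆ {a} := fun x hx => le_antisymm hx.1 hx.2.1
  have hright : Ici a' ∩ IccS ks a ⊆ {a'} :=
    fun x hx => le_antisymm (hs.IccPS_subset_Iic (IccS_subset_IccPS hx.2)) hx.1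
  have hsup : N ⊔ projSub X (Vbar J ks (SClos J Φ₀) a') ≤
      N ⊔ Aplus J ks (SClos J Φ₀) V₁ a ⊔ projSub X (Vbar J ks (SClos J Φ₀) a') :=
    sup_le_sup_right le_sup_left _
  rw [projSub, Submodule.map_le_iff_le_comap]
  refine topologicalClosure_minimal _ (span_le.2 fun φ hφ => ?_)
    (hRHS.preimage (continuous_projL X))
  have hφV := mem_SClos hφ
  rcases h₀.1.suppIn_Iic_or_mem_or_suppIn_Ici hs hφ with h | h | h | h | h
  · exact mem_sup_left (mem_sup_left (hzero hleft ⟨hφV, h⟩))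
  · exact mem_sup_left (mem_sup_left (hid ⟨hφV, h.2⟩))
  · exact mem_sup_left (projL_mem_sup_projSub_oneSubProjSub hN
      (sup_le (VbrevePred_le.trans (hzero IccP_inter_IccS_subset)) hid) ⟨hφV, h.1.1.2⟩)
  · exact hsup (projL_mem_sup_projSub_oneSubProjSub hN
      (sup_le ((hs.VbrevePred_eq _).le.trans hid)
        (hzero ((inter_subset_inter_left _ fun x hx => hx.1).trans hright))) ⟨hφV, h.1.1.2⟩)
  · exact mem_sup_left (mem_sup_left (hzero hright ⟨hφV, h⟩))

lemma sup_le_projSub_Vbreve (hJ : J.OrdConnected) (hks : IsKnotSeq J ks)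
    (h₀ : OrthoCenteredBasis J ks Φ₀) {V₁ : Submodule ℝ (L2S J)} (hle : SClos J Φ₀ ≤ V₁)
    (hs : IsSucc ks a a') :
    Vbreve J ks (SClos J Φ₀) a ⊔ Aplus J ks (SClos J Φ₀) V₁ a ⊔ Aminus J ks (SClos J Φ₀) V₁ a' ≤
      projSub (Vbreve J ks V₁ a) (SClos J Φ₀) := by
  rw [hs.Aminus_eq]
  refine sup_le (sup_le (fun f hf => ⟨f, hf.1, projL_eq_self (Vbreve_mono hle hf)⟩)
    (map_mono ?_)) (map_mono ?_)
  · exact (Vbar_le_Vmid (isClosed_Vmid hJ hks h₀ hs.1)).trans Vmid_le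
  · exact (Vbar_le_Vmid (isClosed_Vmid hJ hks h₀ hs.2.1)).trans Vmid_le

end Decomposition

end KnotWavelet

open KnotWavelet in
theorem breve_A_mutually_orthogonal_and_proj_decomp
    (J ks : Set ℝ) (hJ : J.OrdConnected) (hks : IsKnotSeq J ks)
    (Φ₀ Φ₁ : Set (L2S J))
    (h₀ : OrthoCenteredBasis J ks Φ₀) (h₁ : OrthoCenteredBasis J ks Φ₁)
    (V₀ V₁ : Submodule ℝ (L2S J))
    (hV₀ : V₀ = SClos J Φ₀) (hV₁ : V₁ = SClos J Φ₁) (hle : V₀ ≤ V₁) :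
    ∀ a a' : ℝ, IsSucc ks a a' →
      Vbreve J ks V₀ a ≤ Vbreve J ks V₁ a ∧
      Aplus J ks V₀ V₁ a ≤ Vbreve J ks V₁ a ∧
      Aminus J ks V₀ V₁ a' ≤ Vbreve J ks V₁ a ∧
      PerpSub (Vbreve J ks V₀ a) (Aplus J ks V₀ V₁ a) ∧
      PerpSub (Vbreve J ks V₀ a) (Aminus J ks V₀ V₁ a') ∧
      PerpSub (Aplus J ks V₀ V₁ a) (Aminus J ks V₀ V₁ a') ∧
      projSub (Vbreve J ks V₁ a) V₀ =
        Vbreve J ks V₀ a ⊔ Aplus J ks V₀ V₁ a ⊔ Aminus J ks V₀ V₁ a' := by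
  subst hV₀ hV₁
  intro a a' hs
  have := finiteDimensional_Vbreve hJ hks h₁ hs.1
  have hX := Submodule.closed_of_finiteDimensional (Vbreve J ks (SClos J Φ₁) a)
  refine ⟨Vbreve_mono hle, projSub_le hX, hs.Aminus_eq _ _ ▸ projSub_le hX, ?_, ?_,
    perpSub_Aplus_Aminus hJ hks h₀ h₁ hle hs,
    le_antisymm (projSub_Vbreve_le_sup hJ hks h₀ hle hs) (sup_le_projSub_Vbreve hJ hks h₀ hle hs)⟩
  · exact perpSub_projSub (Vbreve_mono hle)
      (Vbar_le_orthogonal.trans (Submodule.orthogonal_le le_sup_right))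
  · rw [hs.Aminus_eq]
    exact perpSub_projSub (Vbreve_mono hle)
      (Vbar_le_orthogonal.trans
        (Submodule.orthogonal_le ((hs.VbrevePred_eq _).ge.trans le_sup_left)))
end
end
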